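/- Every complete 3-tree is 3-realizable: for every Euclidean realizable edge-length assignment d on a complete 3-tree G, there is a realization of (G, d) in ℝ³. -/

import Mathlib

/-- `f : V → ℝᵏ` is a realization of the graph `G` with edge-length assignment `d`:
every edge `{u,v}` of `G` is drawn with length `d {u,v}`. -/
def IsRealization {V : Type} (G : SimpleGraph V) (d : Sym2 V → ℝ)
    (k : ℕ) (f : V → EuclideanSpace ℝ (Fin k)) : Prop :=
  ∀ u v : V, G.Adj u v → dist (f u) (f v) = d s(u, v)

/-- The edge-length assignment `d` on `G` is Euclidean realizable:
`(G, d)` has a realization in `ℝᵏ` for some `k ≥ 1`. -/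
def EuclideanRealizable {V : Type} (G : SimpleGraph V) (d : Sym2 V → ℝ) : Prop :=
  ∃ k : ℕ, 1 ≤ k ∧ ∃ f : V → EuclideanSpace ℝ (Fin k), IsRealization G d k f

/-- `G` is `n`-realizable: every Euclidean realizable (nonnegative) edge-length
assignment of `G` has a realization in `ℝⁿ`. -/
def DRealizable {V : Type} (G : SimpleGraph V) (n : ℕ) : Prop :=
  ∀ d : Sym2 V → ℝ, (∀ e ∈ G.edgeSet, 0 ≤ d e) → EuclideanRealizable G d →
    ∃ f : V → EuclideanSpace ℝ (Fin n), IsRealization G d n f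

/-- Add a new (apex) vertex adjacent to exactly the three vertices `a`, `b`, `c`. -/
def addApexToTriangle {V : Type} (G : SimpleGraph V) (a b c : V) :
    SimpleGraph (Option V) :=
  SimpleGraph.fromEdgeSet
    (Sym2.map Option.some '' G.edgeSet ∪
      {s((none : Option V), some a), s((none : Option V), some b), s((none : Option V), some c)})

/-- Complete 3-trees: `K₄` is a complete 3-tree, and adding a new vertex adjacent to
exactly the three vertices of a triangle of a complete 3-tree yields a complete 3-tree
(closed under graph isomorphism). -/
inductive IsComplete3Tree : ∀ {V : Type}, SimpleGraph V → Prop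
  | base : IsComplete3Tree (⊤ : SimpleGraph (Fin 4))
  | extend {V : Type} {G : SimpleGraph V} (a b c : V)
      (hab : G.Adj a b) (hac : G.Adj a c) (hbc : G.Adj b c)
      (hG : IsComplete3Tree G) : IsComplete3Tree (addApexToTriangle G a b c)
  | iso {V W : Type} {G : SimpleGraph V} {H : SimpleGraph W}
      (e : G ≃g H) (hG : IsComplete3Tree G) : IsComplete3Tree H

/-!
A realization in any Euclidean space is flattened into `ℝ³` vertex by vertex, following the
construction of the complete 3-tree; only the edge lengths have to be kept. Four points span an
affine space of dimension at most three, so `K₄` embeds isometrically. When an apex is attached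
to a triangle that is already placed congruently in `ℝ³`, write the apex as a point of the affine
plane of the original triangle plus an orthogonal offset: the first part is copied by the
congruence, which preserves inner products with the triangle's edge vectors, and the offset is
replaced by a vector of the same length normal to the copied plane, which exists since a plane
in `ℝ³` leaves a free direction.
-/

open Module Submodule Set InnerProductSpace

section Placement

variable {E F : Type*} [NormedAddCommGroup E] [InnerProductSpace ℝ E]
  [NormedAddCommGroup F] [InnerProductSpace ℝ F] {ι : Type*} [Fintype ι]

theorem exists_mem_span_inner_eq {x : ι → E} {y : ι → F}
    (hxy : ∀ i j, ⟪x i, x j⟫_ℝ = ⟪y i, y j⟫_ℝ) {v : E} (hv : v ∈ span ℝ (range x)) :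
    ∃ w ∈ span ℝ (range y), ‖w‖ = ‖v‖ ∧ ∀ i, ⟪w, y i⟫_ℝ = ⟪v, x i⟫_ℝ := by
  obtain ⟨c, rfl⟩ := (mem_span_range_iff_exists_fun ℝ).1 hv
  have hinner : ∀ j, ⟪∑ i, c i • y i, y j⟫_ℝ = ⟪∑ i, c i • x i, x j⟫_ℝ := fun j => by
    simp only [sum_inner, real_inner_smul_left, hxy]
  refine ⟨∑ i, c i • y i, sum_mem fun i _ => smul_mem _ _ (subset_span (mem_range_self i)), ?_,
    hinner⟩
  rw [← sq_eq_sq₀ (norm_nonneg _) (norm_nonneg _), ← real_inner_self_eq_norm_sq,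
    ← real_inner_self_eq_norm_sq, inner_sum, inner_sum]
  simp only [real_inner_smul_right, hinner]

theorem exists_norm_eq_inner_eq_of_inner_eq [FiniteDimensional ℝ F] {x : ι → E} {y : ι → F}
    (hxy : ∀ i j, ⟪x i, x j⟫_ℝ = ⟪y i, y j⟫_ℝ)
    (hdim : finrank ℝ (span ℝ (range y)) < finrank ℝ F) (p : E) :
    ∃ q : F, ‖q‖ = ‖p‖ ∧ ∀ i, ⟪q, y i⟫_ℝ = ⟪p, x i⟫_ℝ := by
  set U := span ℝ (range x)
  set W := span ℝ (range y)
  have : FiniteDimensional ℝ U := FiniteDimensional.span_of_finite ℝ (finite_range x)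
  set v := U.starProjection p
  have hvU : v ∈ U := U.starProjection_apply_mem p
  have hrU : p - v ∈ Uᗮ := U.sub_starProjection_mem_orthogonal p
  obtain ⟨w, hwW, hw, hwy⟩ := exists_mem_span_inner_eq hxy hvU
  have : Nontrivial Wᗮ := finrank_pos_iff (R := ℝ) |>.1 <| by
    have := W.finrank_add_finrank_orthogonal
    omega
  obtain ⟨z, hz⟩ := exists_norm_eq Wᗮ (norm_nonneg (p - v))
  refine ⟨w + z, ?_, fun i => ?_⟩
  · have hwz : ⟪w, (z : F)⟫_ℝ = 0 := W.inner_right_of_mem_orthogonal hwW z.2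
    have hvr : ⟪v, p - v⟫_ℝ = 0 := U.inner_right_of_mem_orthogonal hvU hrU
    rw [← sq_eq_sq₀ (norm_nonneg _) (norm_nonneg _), ← add_sub_cancel v p, norm_add_sq_real,
      norm_add_sq_real, hwz, hvr, hw, show ‖(z : F)‖ = ‖p - v‖ from hz]
  · have hzy : ⟪(z : F), y i⟫_ℝ = 0 :=
      W.inner_left_of_mem_orthogonal (subset_span (mem_range_self i)) z.2
    have hrx : ⟪p - v, x i⟫_ℝ = 0 :=
      U.inner_left_of_mem_orthogonal (subset_span (mem_range_self i)) hrU
    rw [inner_add_left, hzy, add_zero, hwy, ← add_sub_cancel v p, inner_add_left, hrx, add_zero]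

theorem exists_dist_eq_of_dist_eq [FiniteDimensional ℝ F] {x : ι → E} {y : ι → F}
    (hxy : ∀ i j, dist (x i) (x j) = dist (y i) (y j)) (hdim : Fintype.card ι ≤ finrank ℝ F)
    (p : E) : ∃ q : F, ∀ i, dist q (y i) = dist p (x i) := by
  rcases isEmpty_or_nonempty ι with hι | hι
  · exact ⟨0, isEmptyElim⟩
  obtain ⟨i₀⟩ := hι
  set x' : ι → E := fun i => x i - x i₀
  set y' : ι → F := fun i => y i - y i₀
  have hgram : ∀ i j, ⟪x' i, x' j⟫_ℝ = ⟪y' i, y' j⟫_ℝ := fun i j => by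
    simp only [x', y', real_inner_eq_norm_mul_self_add_norm_mul_self_sub_norm_sub_mul_self_div_two,
      sub_sub_sub_cancel_right, ← dist_eq_norm, hxy]
  have hspan : finrank ℝ (span ℝ (range y')) < finrank ℝ F := by
    have hcard := Fintype.card_pos_iff.2 ⟨i₀⟩
    have hle := finrank_vectorSpan_range_le ℝ y (n := Fintype.card ι - 1) (by omega)
    rw [vectorSpan_range_eq_span_range_vsub_right ℝ y i₀] at hle
    exact hle.trans_lt (by omega)
  obtain ⟨q, hq, hqy⟩ := exists_norm_eq_inner_eq_of_inner_eq hgram hspan (p - x i₀)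
  refine ⟨q + y i₀, fun i => ?_⟩
  have hnorm : ‖y' i‖ = ‖x' i‖ := by simp only [x', y', ← dist_eq_norm, hxy]
  have hq_sub : q + y i₀ - y i = q - y' i := by simp only [y']; abel
  rw [dist_eq_norm, dist_eq_norm, ← sq_eq_sq₀ (norm_nonneg _) (norm_nonneg _), hq_sub,
    ← sub_sub_sub_cancel_right p (x i) (x i₀)]
  calc ‖q - y' i‖ ^ 2 = ‖q‖ ^ 2 - 2 * ⟪q, y' i⟫_ℝ + ‖y' i‖ ^ 2 := norm_sub_sq_real _ _
    _ = ‖p - x i₀‖ ^ 2 - 2 * ⟪p - x i₀, x' i⟫_ℝ + ‖x' i‖ ^ 2 := by rw [hq, hqy, hnorm]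
    _ = ‖p - x i₀ - x' i‖ ^ 2 := (norm_sub_sq_real _ _).symm

theorem exists_fin_dist_eq_of_le_finrank_succ [FiniteDimensional ℝ F] :
    ∀ {n : ℕ}, n ≤ finrank ℝ F + 1 → ∀ p : Fin n → E,
      ∃ q : Fin n → F, ∀ i j, dist (q i) (q j) = dist (p i) (p j)
  | 0, _, _ => ⟨fun _ => 0, fun i => i.elim0⟩
  | n + 1, hn, p => by
    obtain ⟨q, hq⟩ := exists_fin_dist_eq_of_le_finrank_succ (by omega) fun i => p i.castSucc
    obtain ⟨r, hr⟩ := exists_dist_eq_of_dist_eq (fun i j => (hq i j).symm)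
      (by rw [Fintype.card_fin]; omega) (p (Fin.last n))
    refine ⟨Fin.snoc q r, fun i j => ?_⟩
    cases i using Fin.lastCases <;> cases j using Fin.lastCases <;>
      simp [hq, hr, dist_comm (q _), dist_comm (p (Fin.last n))]

end Placement

section Apex

variable {V : Type} {G : SimpleGraph V} {a b c : V}

@[simp]
theorem addApexToTriangle_adj_some_some {u v : V} :
    (addApexToTriangle G a b c).Adj (some u) (some v) ↔ G.Adj u v := by
  have hmap (e : Sym2 V) : Sym2.map some e = s(some u, some v) ↔ e = s(u, v) := by
    rw [← Sym2.map_mk]; exact (Sym2.map.injective (Option.some_injective V)).eq_iff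
  simpa [addApexToTriangle, hmap] using G.ne_of_adj

@[simp]
theorem addApexToTriangle_adj_none_some {v : V} :
    (addApexToTriangle G a b c).Adj none (some v) ↔ v = a ∨ v = b ∨ v = c := by
  have hmap (e : Sym2 V) : Sym2.map some e ≠ s(none, some v) := fun h => by
    simpa [← h, Sym2.mem_map] using Sym2.mem_mk_left (none : Option V) (some v)
  simp [addApexToTriangle, hmap]

end Apex

section Realization

variable {E F : Type*} [NormedAddCommGroup E] [InnerProductSpace ℝ E]
  [NormedAddCommGroup F] [InnerProductSpace ℝ F] [FiniteDimensional ℝ F]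

theorem exists_dist_eq_addApexToTriangle {V : Type} {G : SimpleGraph V} {a b c : V}
    (hab : G.Adj a b) (hac : G.Adj a c) (hbc : G.Adj b c) (hF : 3 ≤ finrank ℝ F)
    {f : Option V → E} {g : V → F}
    (hg : ∀ u v, G.Adj u v → dist (g u) (g v) = dist (f (some u)) (f (some v))) :
    ∃ g' : Option V → F, ∀ u v, (addApexToTriangle G a b c).Adj u v →
      dist (g' u) (g' v) = dist (f u) (f v) := by
  classical
  have hclique : G.IsClique ({a, b, c} : Finset V) := by
    simpa using SimpleGraph.is3Clique_triple_iff.2 ⟨hab, hac, hbc⟩ |>.isClique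
  have htri : ∀ i j : ({a, b, c} : Finset V),
      dist (f (some i)) (f (some j)) = dist (g i) (g j) := by
    rintro ⟨i, hi⟩ ⟨j, hj⟩
    by_cases hij : i = j
    · simp [hij]
    · exact (hg i j (hclique hi hj hij)).symm
  obtain ⟨q, hq⟩ := exists_dist_eq_of_dist_eq htri
    (by simpa using Finset.card_le_three.trans hF) (f none)
  have hapex : ∀ v, (addApexToTriangle G a b c).Adj none (some v) →
      dist q (g v) = dist (f none) (f (some v)) := fun v hv =>
    hq ⟨v, by simpa using addApexToTriangle_adj_none_some.1 hv⟩
  refine ⟨fun o => o.elim q g, ?_⟩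
  rintro (_ | u) (_ | v) huv
  · exact absurd huv (SimpleGraph.irrefl _)
  · exact hapex v huv
  · rw [dist_comm, dist_comm (f _)]
    exact hapex u huv.symm
  · exact hg u v (addApexToTriangle_adj_some_some.1 huv)

theorem IsComplete3Tree.exists_dist_eq {V : Type} {G : SimpleGraph V} (hG : IsComplete3Tree G)
    (hF : 3 ≤ finrank ℝ F) (f : V → E) :
    ∃ g : V → F, ∀ u v, G.Adj u v → dist (g u) (g v) = dist (f u) (f v) := by
  induction hG with
  | base =>
    obtain ⟨g, hg⟩ := exists_fin_dist_eq_of_le_finrank_succ (F := F) (by omega) f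
    exact ⟨g, fun u v _ => hg u v⟩
  | extend a b c hab hac hbc _ ih =>
    obtain ⟨g, hg⟩ := ih fun v => f (some v)
    exact exists_dist_eq_addApexToTriangle hab hac hbc hF hg
  | iso e _ ih =>
    obtain ⟨g, hg⟩ := ih (f ∘ e)
    exact ⟨g ∘ e.symm, fun u v huv => by
      simpa using hg _ _ (e.symm.map_adj_iff.2 huv)⟩

end Realization

theorem complete3Tree_threeRealizable_general {V : Type} (G : SimpleGraph V)
    (hG : IsComplete3Tree G) : DRealizable G 3 := by
  rintro d - ⟨k, -, f, hf⟩
  obtain ⟨g, hg⟩ := hG.exists_dist_eq (F := EuclideanSpace ℝ (Fin 3)) (by simp) f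
  exact ⟨g, fun u v huv => (hg u v huv).trans (hf u v huv)⟩

/-- every complete 3-tree is 3-realizable. -/
theorem complete3Tree_threeRealizable {V : Type} [Fintype V] (G : SimpleGraph V)
    (hG : IsComplete3Tree G) : DRealizable G 3 :=
  complete3Tree_threeRealizable_general G hG
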